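/- For every integer n ≥ 0 and every z ∈ ℂ, the Bessel function J_n defined by the integral representation satisfies the power series identity J_n(z) = (z/2)^n Σ_{k=0}^∞ ((−1)^k / ((n+k)! k!)) (z/2)^{2k}, and moreover J_n(−z) = (−1)^n J_n(z) for all n ∈ ℤ. -/

import Mathlib

open Real

/-- The Bessel function of the first kind of integer order `n`,
`J_n(z) = (1/2π) ∫_0^{2π} e^{iz sin t} e^{−int} dt`. -/
noncomputable def besselJ (n : ℤ) (z : ℂ) : ℂ :=
  (1 / (2 * Real.pi)) * ∫ t in (0:ℝ)..(2 * Real.pi),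
    Complex.exp (Complex.I * z * Real.sin t) * Complex.exp (-Complex.I * n * t)
-- oscillation integral
lemma osc (c : ℤ) : (∫ t in (0:ℝ)..(2 * Real.pi), Complex.exp (Complex.I * c * t))
    = if c = 0 then (2 * Real.pi : ℂ) else 0 := by
  rcases eq_or_ne c 0 with h | h
  · simp [h]
  · rw [if_neg h, integral_exp_mul_complex (by simp [Complex.ext_iff, h, Complex.I_ne_zero])]
    have : Complex.exp (Complex.I * c * (2 * Real.pi)) = 1 := by
      rw [show Complex.I * c * (2 * Real.pi) = (c : ℂ) * (2 * Real.pi * Complex.I) by push_cast; ring]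
      exact Complex.exp_int_mul_two_pi_mul_I c
    simp [this]

lemma sin_expand (t : ℝ) (z : ℂ) : Complex.I * z * Complex.sin t
    = z / 2 * (Complex.exp (Complex.I * t) - Complex.exp (-(Complex.I * t))) := by
  rw [Complex.sin]
  have h := Complex.I_mul_I
  ring_nf
  rw [Complex.I_sq]
  ring

lemma Fpt (n m : ℕ) (z : ℂ) (t : ℝ) :
    (Complex.I * z * Complex.sin t) ^ m / (m.factorial : ℂ) * Complex.exp (-Complex.I * n * t)
    = (z / 2) ^ m / (m.factorial : ℂ) *
        ∑ k ∈ Finset.range (m + 1), ((-1 : ℂ)) ^ (k + m) * (m.choose k : ℂ) *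
          Complex.exp (Complex.I * (((k : ℤ) * 2 - m - n : ℤ) : ℂ) * t) := by
  rw [sin_expand, mul_pow, sub_pow]
  simp only [Finset.mul_sum, Finset.sum_mul, Finset.sum_div]
  refine Finset.sum_congr rfl fun k hk => ?_
  have hk' : k ≤ m := Nat.lt_succ_iff.mp (Finset.mem_range.mp hk)
  have he : Complex.exp (Complex.I * t) ^ k * Complex.exp (-(Complex.I * t)) ^ (m - k) *
      Complex.exp (-Complex.I * n * t)
      = Complex.exp (Complex.I * (((k : ℤ) * 2 - m - n : ℤ) : ℂ) * t) := by
    rw [← Complex.exp_nat_mul, ← Complex.exp_nat_mul, ← Complex.exp_add, ← Complex.exp_add]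
    congr 1
    have : ((m - k : ℕ) : ℂ) = (m : ℂ) - (k : ℂ) := by
      push_cast [Nat.cast_sub hk']; ring
    rw [this]
    push_cast
    ring
  calc (z / 2) ^ m * ((-1 : ℂ) ^ (k + m) * Complex.exp (Complex.I * t) ^ k *
          Complex.exp (-(Complex.I * t)) ^ (m - k) * (m.choose k : ℂ)) / (m.factorial : ℂ) *
        Complex.exp (-Complex.I * n * t)
      = (z / 2) ^ m * ((-1 : ℂ) ^ (k + m) * (m.choose k : ℂ) *
          (Complex.exp (Complex.I * t) ^ k * Complex.exp (-(Complex.I * t)) ^ (m - k) *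
            Complex.exp (-Complex.I * n * t))) / (m.factorial : ℂ) := by ring
    _ = (z / 2) ^ m / (m.factorial : ℂ) * ((-1 : ℂ) ^ (k + m) * (m.choose k : ℂ) *
          Complex.exp (Complex.I * (((k : ℤ) * 2 - m - n : ℤ) : ℂ) * t)) := by rw [he]; ring

lemma Fint (n m : ℕ) (z : ℂ) :
    (∫ t in (0:ℝ)..(2 * Real.pi),
        (Complex.I * z * Complex.sin t) ^ m / (m.factorial : ℂ) * Complex.exp (-Complex.I * n * t))
    = (z / 2) ^ m / (m.factorial : ℂ) *
        ∑ k ∈ Finset.range (m + 1), ((-1 : ℂ)) ^ (k + m) * (m.choose k : ℂ) *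
          (if ((k : ℤ) * 2 - m - n : ℤ) = 0 then (2 * Real.pi : ℂ) else 0) := by
  simp_rw [Fpt n m z]
  rw [intervalIntegral.integral_const_mul]
  congr 1
  rw [intervalIntegral.integral_finset_sum]
  · refine Finset.sum_congr rfl fun k _ => ?_
    rw [intervalIntegral.integral_const_mul, osc]
  · intro k _
    apply Continuous.intervalIntegrable
    fun_prop

lemma Fval1 (n j : ℕ) (z : ℂ) :
    (z / 2) ^ (n + 2 * j) / (((n + 2 * j).factorial : ℂ)) *
        ∑ k ∈ Finset.range ((n + 2 * j) + 1), ((-1 : ℂ)) ^ (k + (n + 2 * j)) *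
          ((n + 2 * j).choose k : ℂ) *
          (if ((k : ℤ) * 2 - (n + 2 * j) - n : ℤ) = 0 then (2 * Real.pi : ℂ) else 0)
    = (2 * Real.pi : ℂ) *
        (((-1 : ℂ)) ^ j / (((n + j).factorial : ℂ) * (j.factorial : ℂ))) * (z / 2) ^ (n + 2 * j) := by
  rw [Finset.sum_eq_single (n + j)]
  · rw [if_pos (by push_cast; ring)]
    have hsign : ((-1 : ℂ)) ^ ((n + j) + (n + 2 * j)) = (-1) ^ j := by
      rw [show (n + j) + (n + 2 * j) = 2 * (n + j) + j by ring, pow_add, pow_mul]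
      simp
    have hchoose : (n + 2 * j).choose (n + j) = (n + 2 * j).choose j := by
      rw [show n + j = (n + 2 * j) - j by omega]
      exact Nat.choose_symm (by omega)
    rw [hsign, hchoose]
    have hfac : ((n + 2 * j).choose j : ℂ) * (j.factorial : ℂ) * (((n + 2 * j) - j).factorial : ℂ)
        = ((n + 2 * j).factorial : ℂ) := by
      exact_mod_cast congrArg (Nat.cast (R := ℂ)) (Nat.choose_mul_factorial_mul_factorial
        (show j ≤ n + 2 * j by omega))
    rw [show n + 2 * j - j = n + j by omega] at hfac
    have h1 : ((n + 2 * j).factorial : ℂ) ≠ 0 := Nat.cast_ne_zero.mpr (Nat.factorial_ne_zero _)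
    have h2 : ((n + j).factorial : ℂ) ≠ 0 := Nat.cast_ne_zero.mpr (Nat.factorial_ne_zero _)
    have h3 : (j.factorial : ℂ) ≠ 0 := Nat.cast_ne_zero.mpr (Nat.factorial_ne_zero _)
    have key : ((n + 2 * j).choose j : ℂ) / ((n + 2 * j).factorial : ℂ)
        = 1 / (((n + j).factorial : ℂ) * (j.factorial : ℂ)) := by
      rw [div_eq_div_iff h1 (mul_ne_zero h2 h3)]
      linear_combination hfac
    linear_combination (z / 2) ^ (n + 2 * j) * (-1 : ℂ) ^ j * (2 * Real.pi : ℂ) * key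
  · intro k _ hk
    rw [if_neg (by push_cast; omega), mul_zero]
  · intro h
    exact absurd (Finset.mem_range.mpr (by omega)) h

lemma Fval0 (n m : ℕ) (z : ℂ) (h : ∀ j, m ≠ n + 2 * j) :
    (z / 2) ^ m / ((m.factorial : ℂ)) *
        ∑ k ∈ Finset.range (m + 1), ((-1 : ℂ)) ^ (k + m) * (m.choose k : ℂ) *
          (if ((k : ℤ) * 2 - m - n : ℤ) = 0 then (2 * Real.pi : ℂ) else 0)
    = 0 := by
  rw [Finset.sum_eq_zero, mul_zero]
  intro k hk
  rw [Finset.mem_range] at hk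
  rw [if_neg, mul_zero]
  intro hc
  exact h (k - n) (by omega)

lemma besselJ_hasSum (n : ℕ) (z : ℂ) :
    HasSum (fun m : ℕ => ∫ t in (0:ℝ)..(2 * Real.pi),
        (Complex.I * z * Complex.sin t) ^ m / (m.factorial : ℂ) * Complex.exp (-Complex.I * n * t))
      (∫ t in (0:ℝ)..(2 * Real.pi),
        Complex.exp (Complex.I * z * Complex.sin t) * Complex.exp (-Complex.I * n * t)) := by
  apply intervalIntegral.hasSum_integral_of_dominated_convergence
    (bound := fun m _ => ‖z‖ ^ m / (m.factorial : ℝ))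
  · intro m
    apply Continuous.aestronglyMeasurable
    fun_prop
  · intro m
    filter_upwards with t _
    have h1 : ‖Complex.exp (-Complex.I * n * t)‖ = 1 := by
      rw [Complex.norm_exp]
      simp
    have h2 : ‖Complex.I * z * Complex.sin t‖ ≤ ‖z‖ := by
      rw [mul_comm Complex.I z, mul_assoc, norm_mul]
      calc ‖z‖ * ‖Complex.I * Complex.sin t‖ ≤ ‖z‖ * 1 := by
            gcongr
            rw [norm_mul, Complex.norm_I, one_mul, ← Complex.ofReal_sin, Complex.norm_real]
            exact abs_sin_le_one t
        _ = ‖z‖ := mul_one _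
    rw [norm_mul, h1, mul_one, norm_div, norm_pow, Complex.norm_natCast]
    gcongr
  · filter_upwards with t _
    exact Real.summable_pow_div_factorial ‖z‖
  · exact intervalIntegrable_const
  · filter_upwards with t _
    have h := NormedSpace.expSeries_div_hasSum_exp (Complex.I * z * Complex.sin t)
    rw [← Complex.exp_eq_exp_ℂ] at h
    exact h.mul_right _

lemma besselJ_parity (m : ℤ) (z : ℂ) : besselJ m (-z) = (-1 : ℂ) ^ m * besselJ m z := by
  have hexp : Complex.exp (-Complex.I * m * Real.pi) = (-1 : ℂ) ^ m := by
    rw [show -Complex.I * m * Real.pi = ((-m : ℤ) : ℂ) * (Real.pi * Complex.I) by push_cast; ring,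
      Complex.exp_int_mul, Complex.exp_pi_mul_I, zpow_neg, ← inv_zpow, inv_neg, inv_one]
  set f : ℝ → ℂ := fun t =>
    Complex.exp (Complex.I * (-z) * Complex.sin t) * Complex.exp (-Complex.I * m * t) with hf
  have hper : Function.Periodic f (2 * Real.pi) := by
    intro t
    simp only [hf]
    have h1 : ((t + 2 * Real.pi : ℝ) : ℂ) = (t : ℂ) + 2 * Real.pi := by push_cast; ring
    rw [h1, Complex.sin_add_two_pi]
    congr 1
    rw [show -Complex.I * m * ((t : ℂ) + 2 * Real.pi)
        = -Complex.I * m * t + ((-m : ℤ) : ℂ) * (2 * Real.pi * Complex.I) by push_cast; ring,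
      Complex.exp_add, Complex.exp_int_mul_two_pi_mul_I, mul_one]
  have hshift : (∫ t in (0:ℝ)..(2 * Real.pi), f t) = ∫ t in (0:ℝ)..(2 * Real.pi), f (t + Real.pi) := by
    rw [intervalIntegral.integral_comp_add_right]
    have := hper.intervalIntegral_add_eq Real.pi 0
    simpa [add_comm] using this.symm
  have hpt : ∀ t : ℝ, f (t + Real.pi)
      = (-1 : ℂ) ^ m * (Complex.exp (Complex.I * z * Complex.sin t)
          * Complex.exp (-Complex.I * m * t)) := by
    intro t
    simp only [hf]
    have h1 : ((t + Real.pi : ℝ) : ℂ) = (t : ℂ) + Real.pi := by push_cast; ring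
    rw [h1, Complex.sin_add_pi]
    rw [show -Complex.I * m * ((t : ℂ) + Real.pi)
        = -Complex.I * m * t + -Complex.I * m * Real.pi by ring, Complex.exp_add, hexp]
    ring_nf
  unfold besselJ
  simp_rw [Complex.ofReal_sin]
  rw [hshift]
  simp_rw [hpt]
  rw [intervalIntegral.integral_const_mul]
  ring

theorem besselJ_series_and_parity (n : ℕ) (z : ℂ) :
    (Summable fun k : ℕ =>
      ((-1 : ℂ) ^ k / (((n + k).factorial : ℂ) * (k.factorial : ℂ))) * (z / 2) ^ (2 * k)) ∧
    besselJ n z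
      = (z / 2) ^ n * ∑' k : ℕ,
          ((-1 : ℂ) ^ k / (((n + k).factorial : ℂ) * (k.factorial : ℂ))) * (z / 2) ^ (2 * k) ∧
    ∀ m : ℤ, besselJ m (-z) = (-1 : ℂ) ^ m * besselJ m z := by
  have hπ : (Real.pi : ℂ) ≠ 0 := Complex.ofReal_ne_zero.mpr Real.pi_ne_zero
  refine ⟨?_, ?_, fun m => besselJ_parity m z⟩
  · apply Summable.of_norm
    apply Summable.of_nonneg_of_le (fun k => norm_nonneg _) _
      (Real.summable_pow_div_factorial (‖z / 2‖ ^ 2))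
    intro k
    have h1 : (1 : ℝ) ≤ ((n + k).factorial : ℝ) := by
      exact_mod_cast Nat.one_le_iff_ne_zero.mpr (Nat.factorial_ne_zero _)
    calc ‖((-1 : ℂ) ^ k / (((n + k).factorial : ℂ) * (k.factorial : ℂ))) * (z / 2) ^ (2 * k)‖
        = ‖z / 2‖ ^ (2 * k) / (((n + k).factorial : ℝ) * (k.factorial : ℝ)) := by
          rw [norm_mul, norm_div, norm_pow, norm_pow, norm_neg, norm_one, one_pow, norm_mul,
            Complex.norm_natCast, Complex.norm_natCast]
          ring
      _ ≤ ‖z / 2‖ ^ (2 * k) / (1 * (k.factorial : ℝ)) := by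
          gcongr
      _ = (‖z / 2‖ ^ 2) ^ k / (k.factorial : ℝ) := by rw [one_mul, ← pow_mul]
  · have hinj : Function.Injective (fun j : ℕ => n + 2 * j) := fun a b hab => by have : n + 2 * a = n + 2 * b := hab; omega
    have h := besselJ_hasSum n z
    have h0 : ∀ m ∉ Set.range (fun j : ℕ => n + 2 * j),
        (∫ t in (0:ℝ)..(2 * Real.pi), (Complex.I * z * Complex.sin t) ^ m / (m.factorial : ℂ) *
          Complex.exp (-Complex.I * n * t)) = 0 := by
      intro m hm
      rw [Fint]
      exact Fval0 n m z (fun j hj => hm ⟨j, hj.symm⟩)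
    have hg := (hinj.hasSum_iff h0).mpr h
    have hfun : ((fun m : ℕ => ∫ t in (0:ℝ)..(2 * Real.pi),
          (Complex.I * z * Complex.sin t) ^ m / (m.factorial : ℂ) *
            Complex.exp (-Complex.I * n * t)) ∘ (fun j : ℕ => n + 2 * j))
        = fun j : ℕ => (2 * Real.pi : ℂ) *
            (((-1 : ℂ)) ^ j / (((n + j).factorial : ℂ) * (j.factorial : ℂ))) * (z / 2) ^ (n + 2 * j) := by
      funext j
      simp only [Function.comp_apply]
      rw [Fint]
      exact Fval1 n j z
    rw [hfun] at hg
    unfold besselJ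
    simp_rw [Complex.ofReal_sin, Int.cast_natCast]
    rw [← hg.tsum_eq, ← tsum_mul_left, ← tsum_mul_left]
    apply tsum_congr
    intro j
    rw [pow_add]
    have h2 : (1 / (2 * (Real.pi : ℂ))) * (2 * Real.pi) = 1 := by
      field_simp
    linear_combination (((-1 : ℂ)) ^ j / (((n + j).factorial : ℂ) * (j.factorial : ℂ))) *
      (z / 2) ^ n * (z / 2) ^ (2 * j) * h2
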